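/- arXiv:1902.00552 — 8 statements merged into one kernel-verified Lean document; each statement's English description precedes it below -/
import Mathlib

section
/- Let φ_1, …, φ_8 be unit vectors in ℝ³. Then max_{1 ≤ i < j ≤ 8} |⟨φ_i, φ_j⟩| ≥ 3/5. -/
/-!
The kernels `G₂(t) = t² - 1/3` and `G₄(t) = t⁴ - (6/7) t² + 3/35` (the Gegenbauer polynomials of
`S²`) are positive definite: `G_k(⟪x, y⟫)` is the inner product of the harmonic (traceless) parts of
`x^{⊗k}` and `y^{⊗k}` for unit `x, y`, so `∑ᵢ ∑ⱼ G_k(⟪φᵢ, φⱼ⟫) ≥ 0`. Levenshtein's polynomial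
`G₄ + (87/175) G₂ = t²(t² - 9/25) - 2/25` is `14/25` at `1` and at most `-2/25` on `(-3/5, 3/5)`,
with equality only at `0`. So if `n ≥ 8` unit vectors had all mutual inner products in
`(-3/5, 3/5)`, its double sum would be at most `2n(8 - n)/25 ≤ 0`, forcing the vectors to be
pairwise orthogonal, which the positivity of `G₂` forbids for `n ≥ 4`.
-/

open Finset
open scoped InnerProductSpace

theorem sum_sum_inner_nonneg {ι E : Type*} [Fintype ι] [NormedAddCommGroup E]
    [InnerProductSpace ℝ E] (v : ι → E) : 0 ≤ ∑ i, ∑ j, ⟪v i, v j⟫_ℝ := by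
  simp only [← inner_sum, ← sum_inner]
  exact real_inner_self_nonneg

noncomputable def harmonicPart2 (x : EuclideanSpace ℝ (Fin 3)) :
    EuclideanSpace ℝ (Fin 3 × Fin 3) :=
  WithLp.toLp 2 fun ⟨i, j⟩ => x i * x j - ⟪x, x⟫_ℝ / 3 * (if i = j then 1 else 0)

-- The coefficients are `1/(d+4)` and `1/((d+2)(d+4))` for `d = 3`.
noncomputable def harmonicPart4 (x : EuclideanSpace ℝ (Fin 3)) :
    EuclideanSpace ℝ (Fin 3 × Fin 3 × Fin 3 × Fin 3) :=
  WithLp.toLp 2 fun ⟨i, j, k, l⟩ =>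
    let δ : Fin 3 → Fin 3 → ℝ := fun a b => if a = b then 1 else 0
    x i * x j * x k * x l
      - ⟪x, x⟫_ℝ / 7 * (x i * x j * δ k l + x i * x k * δ j l + x i * x l * δ j k
        + x j * x k * δ i l + x j * x l * δ i k + x k * x l * δ i j)
      + ⟪x, x⟫_ℝ ^ 2 / 35 * (δ i j * δ k l + δ i k * δ j l + δ i l * δ j k)

theorem inner_harmonicPart2 (x y : EuclideanSpace ℝ (Fin 3)) :
    ⟪harmonicPart2 x, harmonicPart2 y⟫_ℝ = ⟪x, y⟫_ℝ ^ 2 - ⟪x, x⟫_ℝ * ⟪y, y⟫_ℝ / 3 := by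
  simp only [harmonicPart2, PiLp.inner_apply, Fintype.sum_prod_type, Fin.sum_univ_three,
    RCLike.inner_apply, conj_trivial, Fin.isValue, Fin.reduceEq, if_true, if_false]
  ring

theorem inner_harmonicPart4 (x y : EuclideanSpace ℝ (Fin 3)) :
    ⟪harmonicPart4 x, harmonicPart4 y⟫_ℝ = ⟪x, y⟫_ℝ ^ 4
      - 6 / 7 * ⟪x, y⟫_ℝ ^ 2 * (⟪x, x⟫_ℝ * ⟪y, y⟫_ℝ) + 3 / 35 * (⟪x, x⟫_ℝ * ⟪y, y⟫_ℝ) ^ 2 := by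
  simp only [harmonicPart4, PiLp.inner_apply, Fintype.sum_prod_type, Fin.sum_univ_three,
    RCLike.inner_apply, conj_trivial, Fin.isValue, Fin.reduceEq, if_true, if_false]
  ring

section Gegenbauer

variable {ι : Type*} [Fintype ι]

theorem sum_sum_gegenbauer2_nonneg (φ : ι → EuclideanSpace ℝ (Fin 3))
    (hφ : ∀ i, ‖φ i‖ = 1) :
    0 ≤ ∑ i, ∑ j, (⟪φ i, φ j⟫_ℝ ^ 2 - 1 / 3) := by
  have h := sum_sum_inner_nonneg (harmonicPart2 ∘ φ)
  simpa only [Function.comp_apply, inner_harmonicPart2, real_inner_self_eq_norm_sq, hφ,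
    one_pow, mul_one] using h

theorem sum_sum_gegenbauer4_nonneg (φ : ι → EuclideanSpace ℝ (Fin 3))
    (hφ : ∀ i, ‖φ i‖ = 1) :
    0 ≤ ∑ i, ∑ j, (⟪φ i, φ j⟫_ℝ ^ 4 - 6 / 7 * ⟪φ i, φ j⟫_ℝ ^ 2 + 3 / 35) := by
  have h := sum_sum_inner_nonneg (harmonicPart4 ∘ φ)
  simpa only [Function.comp_apply, inner_harmonicPart4, real_inner_self_eq_norm_sq, hφ,
    one_pow, mul_one] using h

end Gegenbauer

section GramMatrix

variable {ι : Type*} [Fintype ι] [DecidableEq ι]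

theorem sum_sum_ite_eq (a b : ℝ) :
    ∑ i : ι, ∑ j : ι, (if i = j then a else b)
      = Fintype.card ι * a + (Fintype.card ι ^ 2 - Fintype.card ι) * b := by
  calc ∑ i : ι, ∑ j : ι, (if i = j then a else b)
      = ∑ i : ι, ∑ j : ι, (b + if i = j then a - b else 0) := by
        congr! 2 with i - j -
        split_ifs <;> ring
    _ = _ := by
        simp only [sum_add_distrib, sum_ite_eq, mem_univ, if_true, sum_const, card_univ,
          nsmul_eq_mul]
        ring

theorem exists_ne_and_ne_zero_of_sum_sum_gegenbauer2_nonneg (g : ι → ι → ℝ)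
    (hdiag : ∀ i, g i i = 1) (hcard : 4 ≤ Fintype.card ι)
    (h2 : 0 ≤ ∑ i, ∑ j, (g i j ^ 2 - 1 / 3)) : ∃ i j, i ≠ j ∧ g i j ≠ 0 := by
  by_contra! horth
  have hentry (i j : ι) : g i j ^ 2 - 1 / 3 = if i = j then 2 / 3 else -1 / 3 := by
    split_ifs with hij
    · rw [hij, hdiag]; norm_num
    · rw [horth i j hij]; norm_num
  simp only [hentry, sum_sum_ite_eq] at h2
  have hn : (4 : ℝ) ≤ Fintype.card ι := by exact_mod_cast hcard
  nlinarith

theorem card_lt_eight_of_sum_sum_gegenbauer_nonneg (g : ι → ι → ℝ)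
    (hdiag : ∀ i, g i i = 1) (hoff : ∀ i j, i ≠ j → |g i j| < 3 / 5)
    (h2 : 0 ≤ ∑ i, ∑ j, (g i j ^ 2 - 1 / 3))
    (h4 : 0 ≤ ∑ i, ∑ j, (g i j ^ 4 - 6 / 7 * g i j ^ 2 + 3 / 35)) :
    Fintype.card ι < 8 := by
  by_contra! hcard
  obtain ⟨i₀, j₀, hne₀, hg₀⟩ :=
    exists_ne_and_ne_zero_of_sum_sum_gegenbauer2_nonneg g hdiag (by omega) h2
  have hlev : 0 ≤ ∑ i, ∑ j, (g i j ^ 4 - 9 / 25 * g i j ^ 2 - 2 / 25) := by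
    have hcomb : ∑ i, ∑ j, (g i j ^ 4 - 9 / 25 * g i j ^ 2 - 2 / 25)
        = ∑ i, ∑ j, (g i j ^ 4 - 6 / 7 * g i j ^ 2 + 3 / 35)
          + 87 / 175 * ∑ i, ∑ j, (g i j ^ 2 - 1 / 3) := by
      simp only [mul_sum, ← sum_add_distrib]
      exact sum_congr rfl fun i _ => sum_congr rfl fun j _ => by ring
    rw [hcomb]
    positivity
  have hsq {i j : ι} (hij : i ≠ j) : g i j ^ 2 < 9 / 25 := by
    nlinarith [hoff i j hij, sq_abs (g i j), abs_nonneg (g i j)]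
  have hle (i j : ι) :
      g i j ^ 4 - 9 / 25 * g i j ^ 2 - 2 / 25 ≤ if i = j then 14 / 25 else -2 / 25 := by
    split_ifs with hij
    · rw [hij, hdiag]; norm_num
    · nlinarith [mul_nonneg (sq_nonneg (g i j)) (sub_nonneg.mpr (hsq hij).le)]
  have hlt : g i₀ j₀ ^ 4 - 9 / 25 * g i₀ j₀ ^ 2 - 2 / 25 < -2 / 25 := by
    nlinarith [mul_pos (pow_pos (abs_pos.mpr hg₀) 2) (sub_pos.mpr (hsq hne₀)), sq_abs (g i₀ j₀)]
  have hsum_lt : ∑ i, ∑ j, (g i j ^ 4 - 9 / 25 * g i j ^ 2 - 2 / 25)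
      < ∑ i : ι, ∑ j : ι, (if i = j then 14 / 25 else -2 / 25) := by
    simp only [← Fintype.sum_prod_type']
    refine sum_lt_sum (fun p _ => hle p.1 p.2) ⟨(i₀, j₀), mem_univ _, ?_⟩
    simpa only [if_neg hne₀] using hlt
  rw [sum_sum_ite_eq] at hsum_lt
  have hn : (8 : ℝ) ≤ Fintype.card ι := by exact_mod_cast hcard
  nlinarith

end GramMatrix

/-- Any `8` unit vectors `φ₁, …, φ₈` in `ℝ³` satisfy
`max_{1 ≤ i < j ≤ 8} |⟨φᵢ, φⱼ⟩| ≥ 3/5`. -/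
theorem eight_packing_coherence_lower_bound
    (φ : Fin 8 → EuclideanSpace ℝ (Fin 3)) (hunit : ∀ i, ‖φ i‖ = 1) :
    ∃ i j : Fin 8, i < j ∧ (3 / 5 : ℝ) ≤ |(inner ℝ (φ i) (φ j) : ℝ)| := by
  by_contra! hsmall
  have hoff (i j : Fin 8) (hij : i ≠ j) : |⟪φ i, φ j⟫_ℝ| < 3 / 5 := by
    rcases hij.lt_or_gt with h | h
    · exact hsmall i j h
    · rw [real_inner_comm]
      exact hsmall j i h
  have hdiag (i : Fin 8) : ⟪φ i, φ i⟫_ℝ = 1 := by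
    rw [real_inner_self_eq_norm_sq, hunit, one_pow]
  have := card_lt_eight_of_sum_sum_gegenbauer_nonneg (fun i j => ⟪φ i, φ j⟫_ℝ) hdiag hoff
    (sum_sum_gegenbauer2_nonneg φ hunit) (sum_sum_gegenbauer4_nonneg φ hunit)
  simp at this
end

section
/- The polynomial p(x) = 1 + 5x − 8x² − 80x³ − 78x⁴ + 146x⁵ − 80x⁶ − 584x⁷ + 677x⁸ + 1537x⁹ has a real root μ_0 with 0.64758897 < μ_0 < 0.64758898, and every real root x of p satisfies x ≤ μ_0. -/
noncomputable section

private def pf : ℝ → ℝ := fun x =>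
  1 + 5 * x - 8 * x ^ 2 - 80 * x ^ 3 - 78 * x ^ 4 + 146 * x ^ 5 - 80 * x ^ 6
    - 584 * x ^ 7 + 677 * x ^ 8 + 1537 * x ^ 9

private lemma pf_cont : Continuous pf := by
  unfold pf; continuity

private lemma pf_pos_of_ge (x : ℝ) (hx : (0.64758898 : ℝ) ≤ x) : 0 < pf x := by
  have h : (0:ℝ) ≤ x - 0.64758898 := by linarith
  unfold pf
  nlinarith [pow_nonneg h 2, pow_nonneg h 3, pow_nonneg h 4, pow_nonneg h 5,
    pow_nonneg h 6, pow_nonneg h 7, pow_nonneg h 8, pow_nonneg h 9, h]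

private lemma pf_a_neg : pf (0.64758897 : ℝ) < 0 := by unfold pf; norm_num

private lemma pf_b_pos : (0:ℝ) < pf (0.64758898 : ℝ) := by unfold pf; norm_num

/-- The polynomial `p(x) = 1 + 5x − 8x² − 80x³ − 78x⁴ + 146x⁵ − 80x⁶ − 584x⁷ + 677x⁸ + 1537x⁹`
has a real root `μ₀` with `0.64758897 < μ₀ < 0.64758898`, and every real root of `p` is
at most `μ₀`. -/
theorem largest_real_root :
    ∃ μ0 : ℝ,
      (1 + 5 * μ0 - 8 * μ0 ^ 2 - 80 * μ0 ^ 3 - 78 * μ0 ^ 4 + 146 * μ0 ^ 5 - 80 * μ0 ^ 6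
          - 584 * μ0 ^ 7 + 677 * μ0 ^ 8 + 1537 * μ0 ^ 9 = 0) ∧
      (0.64758897 : ℝ) < μ0 ∧ μ0 < 0.64758898 ∧
      ∀ x : ℝ,
        1 + 5 * x - 8 * x ^ 2 - 80 * x ^ 3 - 78 * x ^ 4 + 146 * x ^ 5 - 80 * x ^ 6
            - 584 * x ^ 7 + 677 * x ^ 8 + 1537 * x ^ 9 = 0 → x ≤ μ0 := by
  set S : Set ℝ := {x | pf x = 0} with hS
  have hab : (0.64758897 : ℝ) ≤ 0.64758898 := by norm_num
  obtain ⟨c, hc_mem, hc⟩ : ∃ c ∈ Set.Icc (0.64758897 : ℝ) 0.64758898, pf c = 0 := by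
    have := intermediate_value_Icc hab pf_cont.continuousOn (a := (0.64758897:ℝ))
      (b := 0.64758898)
    have h0 : (0:ℝ) ∈ Set.Icc (pf 0.64758897) (pf 0.64758898) :=
      ⟨le_of_lt pf_a_neg, le_of_lt pf_b_pos⟩
    obtain ⟨c, hc1, hc2⟩ := this h0
    exact ⟨c, hc1, hc2⟩
  have hSne : S.Nonempty := ⟨c, hc⟩
  have hSbdd : BddAbove S := by
    refine ⟨0.64758898, fun x hx => ?_⟩
    by_contra h
    push_neg at h
    exact absurd hx (ne_of_gt (pf_pos_of_ge x h.le))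
  have hSclosed : IsClosed S := isClosed_eq pf_cont continuous_const
  set μ0 := sSup S with hμ0
  have hmem : μ0 ∈ S := hSclosed.csSup_mem hSne hSbdd
  have hroot : pf μ0 = 0 := hmem
  have hle : ∀ x : ℝ, pf x = 0 → x ≤ μ0 := fun x hx => le_csSup hSbdd hx
  have hcle : c ≤ μ0 := hle c hc
  have h1 : (0.64758897 : ℝ) < μ0 := by
    rcases lt_or_eq_of_le (hc_mem.1.trans hcle) with h | h
    · exact h
    · exact absurd (h ▸ hroot) (ne_of_lt pf_a_neg)
  have h2 : μ0 < 0.64758898 := by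
    by_contra h
    push_neg at h
    exact absurd hroot (ne_of_gt (pf_pos_of_ge μ0 h))
  exact ⟨μ0, hroot, h1, h2, hle⟩

end
end

section
/- The polynomial p(x) = 1 + 5x − 8x² − 80x³ − 78x⁴ + 146x⁵ − 80x⁶ − 584x⁷ + 677x⁸ + 1537x⁹ is irreducible over ℚ. -/
/-!
Reduce modulo 19, the least prime modulo which `p` stays irreducible. The image `f` of `p` in
`𝔽₁₉[X]` still has degree 9, and it is irreducible by Ben-Or's test: an irreducible factor of `f`
of degree `d ≤ 4` would divide `X ^ 19 ^ d - X`, but `f` is coprime to each of these four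
polynomials. The residues of `X ^ 19 ^ d` modulo `f` are certified by repeated squaring and the
coprimality by explicit Bézout identities. Since `p` is primitive and its degree does not drop
modulo 19, irreducibility lifts from `𝔽₁₉` to `ℤ`, and by Gauss's lemma to `ℚ`.
-/

open Polynomial

namespace Polynomial

theorem isPrimitive_of_isUnit_coeff {R : Type*} [CommSemiring R] {p : R[X]} (n : ℕ)
    (h : IsUnit (p.coeff n)) : p.IsPrimitive :=
  fun _ hr => isUnit_of_dvd_unit ((C_dvd_iff_dvd_coeff _ _).mp hr n) h

theorem IsPrimitive.isUnit_of_dvd_of_natDegree_eq_zero {R : Type*} [CommSemiring R] {p q : R[X]}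
    (hp : p.IsPrimitive) (hq : q ∣ p) (hq0 : q.natDegree = 0) : IsUnit q := by
  rw [eq_C_of_natDegree_eq_zero hq0] at hq ⊢
  exact (hp _ hq).map C

theorem IsPrimitive.irreducible_of_irreducible_map_of_natDegree_eq {R S : Type*}
    [CommSemiring R] [NoZeroDivisors R] [CommSemiring S] [NoZeroDivisors S] {φ : R →+* S}
    {p : R[X]} (hp : p.IsPrimitive)
    (hdeg : (p.map φ).natDegree = p.natDegree) (hirr : Irreducible (p.map φ)) :
    Irreducible p := by
  refine ⟨fun hu => hirr.not_isUnit (hu.map (mapRingHom φ)), fun a b hab => ?_⟩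
  have hmap : p.map φ = a.map φ * b.map φ := by rw [hab, Polynomial.map_mul]
  have hab0 : a.map φ * b.map φ ≠ 0 := hmap ▸ hirr.ne_zero
  have ha0 : a ≠ 0 := by rintro rfl; simp at hab0
  have hb0 : b ≠ 0 := by rintro rfl; simp at hab0
  have hsum : (a.map φ).natDegree + (b.map φ).natDegree = a.natDegree + b.natDegree := by
    rw [← natDegree_mul (left_ne_zero_of_mul hab0) (right_ne_zero_of_mul hab0), ← hmap, hdeg,
      hab, natDegree_mul ha0 hb0]
  have ha := natDegree_map_le (f := φ) (p := a)
  have hb := natDegree_map_le (f := φ) (p := b)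
  refine (hirr.isUnit_or_isUnit hmap).imp (fun hu => ?_) (fun hu => ?_)
  · exact hp.isUnit_of_dvd_of_natDegree_eq_zero (hab ▸ dvd_mul_right a b)
      (by have := natDegree_eq_zero_of_isUnit hu; omega)
  · exact hp.isUnit_of_dvd_of_natDegree_eq_zero (hab ▸ dvd_mul_left b a)
      (by have := natDegree_eq_zero_of_isUnit hu; omega)

theorem irreducible_of_forall_isCoprime_X_pow_card_pow_sub_X {K : Type*} [Field K] [Finite K]
    {f : K[X]} (hf : 0 < f.natDegree)
    (h : ∀ d ∈ Finset.Ioc 0 (f.natDegree / 2), IsCoprime f (X ^ Nat.card K ^ d - X)) :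
    Irreducible f := by
  have hf0 : f ≠ 0 := ne_zero_of_natDegree_gt hf
  have hfu : ¬IsUnit f := fun hu => hf.ne' (natDegree_eq_zero_of_isUnit hu)
  rw [irreducible_iff_lt_natDegree_lt hf0 hfu]
  intro q hq hqdeg hqf
  have hqu : ¬IsUnit q := fun hu =>
    (Finset.mem_Ioc.mp hqdeg).1.ne' (natDegree_eq_zero_of_isUnit hu)
  obtain ⟨g, hg, hgq⟩ := WfDvdMonoid.exists_irreducible_factor hqu hq.ne_zero
  have hgdeg : g.natDegree ∈ Finset.Ioc 0 (f.natDegree / 2) :=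
    Finset.mem_Ioc.mpr ⟨hg.natDegree_pos,
      (natDegree_le_of_dvd hgq hq.ne_zero).trans (Finset.mem_Ioc.mp hqdeg).2⟩
  exact hg.not_isUnit <| (h _ hgdeg).isUnit_of_dvd' (hgq.trans hqf)
    (hg.natDegree_dvd_iff_dvd_X_pow_card_pow_sub_X.mp dvd_rfl)

theorem dvd_X_pow_add_sub {R : Type*} [CommRing R] {f s u t : R[X]} {a b c : ℕ}
    (hs : f ∣ X ^ a - s) (hu : f ∣ X ^ b - u) (ht : f ∣ s * u - t)
    (hc : a + b = c := by norm_num) : f ∣ X ^ c - t := by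
  subst hc
  have : X ^ (a + b) - t = X ^ b * (X ^ a - s) + s * (X ^ b - u) + (s * u - t) := by ring
  rw [this]
  exact dvd_add (dvd_add (hs.mul_left _) (hu.mul_left _)) ht

end Polynomial

/- `hp` is explicit rather than `[Fact p.Prime]` so that `(ZMod p)[X]` carries the ring structure
of `ZMod.commRing`, as explicit polynomials do; unifying a large power such as `X ^ 19 ^ 4` across
the two instance paths unfolds it. -/
theorem ZMod.irreducible_of_forall_isCoprime_X_pow_pow_sub_X {p : ℕ} (hp : p.Prime)
    {f : (ZMod p)[X]} (hf : 0 < f.natDegree)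
    (h : ∀ d ∈ Finset.Ioc 0 (f.natDegree / 2), IsCoprime f (X ^ p ^ d - X)) :
    Irreducible f := by
  have := Fact.mk hp
  exact irreducible_of_forall_isCoprime_X_pow_card_pow_sub_X hf
    (by simpa only [Nat.card_zmod] using h)

theorem isCoprime_sub_of_dvd_sub {R : Type*} [CommRing R] {f a b c : R} (h : f ∣ a - b)
    (hc : IsCoprime f (b - c)) : IsCoprime f (a - c) := by
  obtain ⟨k, hk⟩ := h
  rw [show a - c = b - c + f * k by linear_combination hk]
  exact hc.add_mul_left_right k

noncomputable def coherencePoly : ℤ[X] :=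
  1 + 5 * X - 8 * X ^ 2 - 80 * X ^ 3 - 78 * X ^ 4 + 146 * X ^ 5 - 80 * X ^ 6 - 584 * X ^ 7 +
    677 * X ^ 8 + 1537 * X ^ 9

noncomputable def coherencePolyMod19 : (ZMod 19)[X] :=
  1 + 5 * X + 11 * X ^ 2 + 15 * X ^ 3 + 17 * X ^ 4 + 13 * X ^ 5 + 15 * X ^ 6 + 5 * X ^ 7 +
    12 * X ^ 8 + 17 * X ^ 9

theorem map_coherencePoly_zmod19 :
    coherencePoly.map (Int.castRingHom (ZMod 19)) = coherencePolyMod19 := by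
  rw [← sub_eq_zero]
  simp only [coherencePoly, coherencePolyMod19, Polynomial.map_add, Polynomial.map_sub,
    Polynomial.map_mul, Polynomial.map_pow, Polynomial.map_X, Polynomial.map_one,
    Polynomial.map_ofNat]
  ring_nf
  reduce_mod_char

theorem natDegree_coherencePoly : coherencePoly.natDegree = 9 := by
  unfold coherencePoly; compute_degree!

theorem natDegree_coherencePolyMod19 : coherencePolyMod19.natDegree = 9 := by
  unfold coherencePolyMod19; compute_degree!

theorem coherencePolyMod19_dvd_X_pow_19_sub :
    coherencePolyMod19 ∣ X ^ 19 -
      (3 + 4 * X + 11 * X ^ 2 + 11 * X ^ 3 + 15 * X ^ 4 + 8 * X ^ 5 + 4 * X ^ 6 +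
        6 * X ^ 7 + 5 * X ^ 8) :=
  ⟨16 + 11 * X + 5 * X ^ 2 + 2 * X ^ 3 + 15 * X ^ 4 + 14 * X ^ 5 + 4 * X ^ 6 +
     11 * X ^ 7 + 14 * X ^ 8 + 16 * X ^ 9 + 9 * X ^ 10,
   sub_eq_zero.mp (by rw [coherencePolyMod19]; ring_nf; reduce_mod_char)⟩

theorem coherencePolyMod19_dvd_X_pow_19_pow_2_sub :
    coherencePolyMod19 ∣ X ^ 19 ^ 2 -
      (16 + 9 * X + 3 * X ^ 2 + 17 * X ^ 3 + 16 * X ^ 4 + 16 * X ^ 5 + 14 * X ^ 6 +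
        12 * X ^ 7 + 15 * X ^ 8) := by
  have h19 := coherencePolyMod19_dvd_X_pow_19_sub
  have h38 : coherencePolyMod19 ∣ X ^ 38 -
      (8 + X ^ 2 + 10 * X ^ 4 + 5 * X ^ 5 + 16 * X ^ 6 + 9 * X ^ 7 + 6 * X ^ 8) :=
    dvd_X_pow_add_sub h19 h19
      ⟨1 + 13 * X ^ 2 + 17 * X ^ 3 + 6 * X ^ 4 + 18 * X ^ 5 + 9 * X ^ 6 + 16 * X ^ 7,
       sub_eq_zero.mp (by rw [coherencePolyMod19]; ring_nf; reduce_mod_char)⟩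
  have h76 : coherencePolyMod19 ∣ X ^ 76 -
      (1 + 13 * X + 9 * X ^ 2 + X ^ 3 + 6 * X ^ 4 + 5 * X ^ 5 + 13 * X ^ 6 + 7 * X ^ 7 +
        13 * X ^ 8) :=
    dvd_X_pow_add_sub h38 h38
      ⟨6 + 14 * X + 4 * X ^ 2 + X ^ 3 + 3 * X ^ 4 + 15 * X ^ 5 + 9 * X ^ 6 + X ^ 7,
       sub_eq_zero.mp (by rw [coherencePolyMod19]; ring_nf; reduce_mod_char)⟩
  have h152 : coherencePolyMod19 ∣ X ^ 152 -
      (8 + 4 * X + 15 * X ^ 2 + 9 * X ^ 3 + 4 * X ^ 5 + 9 * X ^ 6 + 18 * X ^ 7 +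
        16 * X ^ 8) :=
    dvd_X_pow_add_sub h76 h76
      ⟨12 + 2 * X ^ 2 + 18 * X ^ 3 + 12 * X ^ 4 + 2 * X ^ 5 + 10 * X ^ 6 + X ^ 7,
       sub_eq_zero.mp (by rw [coherencePolyMod19]; ring_nf; reduce_mod_char)⟩
  have h304 : coherencePolyMod19 ∣ X ^ 304 -
      (7 + 18 * X + 2 * X ^ 2 + 8 * X ^ 3 + 13 * X ^ 4 + 11 * X ^ 5 + 4 * X ^ 6 +
        5 * X ^ 7 + 14 * X ^ 8) :=
    dvd_X_pow_add_sub h152 h152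
      ⟨8 * X + 5 * X ^ 2 + 10 * X ^ 3 + 2 * X ^ 4 + 11 * X ^ 5 + 8 * X ^ 6 + 5 * X ^ 7,
       sub_eq_zero.mp (by rw [coherencePolyMod19]; ring_nf; reduce_mod_char)⟩
  have h342 : coherencePolyMod19 ∣ X ^ 342 -
      (16 + 3 * X ^ 2 + 11 * X ^ 3 + 18 * X ^ 4 + 10 * X ^ 5 + 6 * X ^ 6 + 8 * X ^ 7 +
        13 * X ^ 8) :=
    dvd_X_pow_add_sub h304 h38
      ⟨2 + X + 12 * X ^ 2 + 8 * X ^ 3 + 13 * X ^ 4 + X ^ 5 + 12 * X ^ 6 + 15 * X ^ 7,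
       sub_eq_zero.mp (by rw [coherencePolyMod19]; ring_nf; reduce_mod_char)⟩
  exact dvd_X_pow_add_sub h342 h19
    ⟨13 + 9 * X + 13 * X ^ 2 + 16 * X ^ 3 + 4 * X ^ 4 + 16 * X ^ 5 + 12 * X ^ 6 +
       15 * X ^ 7,
     sub_eq_zero.mp (by rw [coherencePolyMod19]; ring_nf; reduce_mod_char)⟩

theorem coherencePolyMod19_dvd_X_pow_19_pow_3_sub :
    coherencePolyMod19 ∣ X ^ 19 ^ 3 -
      (6 + 14 * X + 4 * X ^ 2 + 5 * X ^ 3 + 2 * X ^ 4 + 13 * X ^ 5 + 12 * X ^ 6 +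
        17 * X ^ 8) := by
  have h361 := coherencePolyMod19_dvd_X_pow_19_pow_2_sub
  have h722 : coherencePolyMod19 ∣ X ^ 722 -
      (9 + 11 * X + 14 * X ^ 2 + X ^ 3 + 3 * X ^ 4 + 6 * X ^ 5 + 16 * X ^ 6 + 2 * X ^ 7 +
        6 * X ^ 8) :=
    dvd_X_pow_add_sub h361 h361
      ⟨11 * X + 13 * X ^ 2 + 12 * X ^ 3 + 2 * X ^ 5 + 11 * X ^ 7,
       sub_eq_zero.mp (by rw [coherencePolyMod19]; ring_nf; reduce_mod_char)⟩
  have h1444 : coherencePolyMod19 ∣ X ^ 1444 -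
      (2 + 15 * X + 18 * X ^ 4 + 5 * X ^ 5 + 9 * X ^ 6 + 12 * X ^ 7 + 9 * X ^ 8) :=
    dvd_X_pow_add_sub h722 h722
      ⟨3 + 16 * X + 13 * X ^ 2 + 2 * X ^ 3 + 11 * X ^ 5 + 13 * X ^ 6 + X ^ 7,
       sub_eq_zero.mp (by rw [coherencePolyMod19]; ring_nf; reduce_mod_char)⟩
  have h2888 : coherencePolyMod19 ∣ X ^ 2888 -
      (12 + 16 * X + 4 * X ^ 2 + 18 * X ^ 3 + 9 * X ^ 4 + X ^ 5 + X ^ 6 + 6 * X ^ 7) :=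
    dvd_X_pow_add_sub h1444 h1444
      ⟨11 + 8 * X + 3 * X ^ 2 + 18 * X ^ 3 + 13 * X ^ 4 + 10 * X ^ 5 + 10 * X ^ 6 +
         7 * X ^ 7,
       sub_eq_zero.mp (by rw [coherencePolyMod19]; ring_nf; reduce_mod_char)⟩
  have h5776 : coherencePolyMod19 ∣ X ^ 5776 -
      (14 + 18 * X + 5 * X ^ 2 + 15 * X ^ 3 + 7 * X ^ 4 + 7 * X ^ 5 + 16 * X ^ 6 +
        3 * X ^ 7 + 4 * X ^ 8) :=
    dvd_X_pow_add_sub h2888 h2888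
      ⟨16 + X + 14 * X ^ 2 + 15 * X ^ 3 + X ^ 5,
       sub_eq_zero.mp (by rw [coherencePolyMod19]; ring_nf; reduce_mod_char)⟩
  have h6498 : coherencePolyMod19 ∣ X ^ 6498 -
      (3 * X + 15 * X ^ 2 + 14 * X ^ 3 + 16 * X ^ 4 + 5 * X ^ 5 + 14 * X ^ 6 + X ^ 7 +
        11 * X ^ 8) :=
    dvd_X_pow_add_sub h5776 h722
      ⟨12 + 6 * X + 15 * X ^ 2 + 7 * X ^ 3 + 4 * X ^ 5 + 10 * X ^ 6 + 7 * X ^ 7,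
       sub_eq_zero.mp (by rw [coherencePolyMod19]; ring_nf; reduce_mod_char)⟩
  exact dvd_X_pow_add_sub h6498 h361
    ⟨13 + 7 * X + 9 * X ^ 2 + 8 * X ^ 3 + 11 * X ^ 4 + 9 * X ^ 5 + 11 * X ^ 6 +
       3 * X ^ 7,
     sub_eq_zero.mp (by rw [coherencePolyMod19]; ring_nf; reduce_mod_char)⟩

theorem coherencePolyMod19_dvd_X_pow_19_pow_4_sub :
    coherencePolyMod19 ∣ X ^ 19 ^ 4 -
      (12 + 11 * X + 14 * X ^ 2 + X ^ 3 + 2 * X ^ 4 + X ^ 5 + 10 * X ^ 6 + 7 * X ^ 7 +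
        10 * X ^ 8) := by
  have h6859 := coherencePolyMod19_dvd_X_pow_19_pow_3_sub
  have h13718 : coherencePolyMod19 ∣ X ^ 13718 -
      (13 + 10 * X + 10 * X ^ 2 + 9 * X ^ 3 + 12 * X ^ 4 + 2 * X ^ 5 + 15 * X ^ 6 +
        10 * X ^ 7 + 4 * X ^ 8) :=
    dvd_X_pow_add_sub h6859 h6859
      ⟨4 + 5 * X + 13 * X ^ 2 + 2 * X ^ 3 + 5 * X ^ 4 + 4 * X ^ 5 + 7 * X ^ 6 +
         17 * X ^ 7,
       sub_eq_zero.mp (by rw [coherencePolyMod19]; ring_nf; reduce_mod_char)⟩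
  have h27436 : coherencePolyMod19 ∣ X ^ 27436 -
      (11 + 8 * X + 8 * X ^ 3 + 6 * X ^ 4 + 6 * X ^ 5 + 12 * X ^ 6 + 7 * X ^ 7 +
        9 * X ^ 8) :=
    dvd_X_pow_add_sub h13718 h13718
      ⟨6 + 13 * X + X ^ 2 + 17 * X ^ 3 + 3 * X ^ 4 + 7 * X ^ 5 + 7 * X ^ 6 + 11 * X ^ 7,
       sub_eq_zero.mp (by rw [coherencePolyMod19]; ring_nf; reduce_mod_char)⟩
  have h54872 : coherencePolyMod19 ∣ X ^ 54872 -
      (4 + 18 * X + 16 * X ^ 2 + 9 * X ^ 3 + 10 * X ^ 4 + 17 * X ^ 5 + 7 * X ^ 6 +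
        8 * X ^ 7 + 5 * X ^ 8) :=
    dvd_X_pow_add_sub h27436 h27436
      ⟨3 + 10 * X + 3 * X ^ 2 + 16 * X ^ 3 + 12 * X ^ 4 + 6 * X ^ 5 + 17 * X ^ 6 +
         7 * X ^ 7,
       sub_eq_zero.mp (by rw [coherencePolyMod19]; ring_nf; reduce_mod_char)⟩
  have h109744 : coherencePolyMod19 ∣ X ^ 109744 -
      (2 + 7 * X + 14 * X ^ 2 + 9 * X ^ 3 + 18 * X ^ 4 + 4 * X ^ 5 + 6 * X ^ 6 +
        7 * X ^ 7 + 11 * X ^ 8) :=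
    dvd_X_pow_add_sub h54872 h54872
      ⟨14 + 10 * X + 6 * X ^ 2 + 4 * X ^ 3 + 16 * X ^ 4 + 5 * X ^ 5 + 18 * X ^ 6 +
         16 * X ^ 7,
       sub_eq_zero.mp (by rw [coherencePolyMod19]; ring_nf; reduce_mod_char)⟩
  have h123462 : coherencePolyMod19 ∣ X ^ 123462 -
      (3 + 7 * X + 14 * X ^ 2 + 15 * X ^ 3 + 16 * X ^ 5 + 6 * X ^ 6 + 14 * X ^ 7 +
        14 * X ^ 8) :=
    dvd_X_pow_add_sub h109744 h13718
      ⟨4 + 8 * X + 3 * X ^ 2 + 15 * X ^ 3 + 8 * X ^ 4 + 6 * X ^ 5 + 8 * X ^ 6 +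
         16 * X ^ 7,
       sub_eq_zero.mp (by rw [coherencePolyMod19]; ring_nf; reduce_mod_char)⟩
  exact dvd_X_pow_add_sub h123462 h6859
    ⟨6 + 5 * X + 13 * X ^ 2 + 4 * X ^ 3 + 3 * X ^ 4 + 13 * X ^ 5 + 3 * X ^ 6 +
       14 * X ^ 7,
     sub_eq_zero.mp (by rw [coherencePolyMod19]; ring_nf; reduce_mod_char)⟩

theorem irreducible_coherencePolyMod19 : Irreducible coherencePolyMod19 := by
  refine ZMod.irreducible_of_forall_isCoprime_X_pow_pow_sub_X (by norm_num)
    (by rw [natDegree_coherencePolyMod19]; norm_num) fun d hd => ?_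
  rw [natDegree_coherencePolyMod19, Finset.mem_Ioc] at hd
  obtain ⟨hd0, hd4⟩ := hd
  interval_cases d
  · exact isCoprime_sub_of_dvd_sub coherencePolyMod19_dvd_X_pow_19_sub
      ⟨15 + 17 * X + 12 * X ^ 2 + 15 * X ^ 3 + 2 * X ^ 4 + 7 * X ^ 5 + 12 * X ^ 6 +
         7 * X ^ 7,
       8 + 12 * X + 17 * X ^ 2 + 7 * X ^ 3 + 6 * X ^ 4 + 5 * X ^ 5 + 18 * X ^ 6 +
         12 * X ^ 7 + 18 * X ^ 8,
       sub_eq_zero.mp (by rw [coherencePolyMod19]; ring_nf; reduce_mod_char)⟩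
  · exact isCoprime_sub_of_dvd_sub coherencePolyMod19_dvd_X_pow_19_pow_2_sub
      ⟨5 + 15 * X + 11 * X ^ 2 + 9 * X ^ 3 + 5 * X ^ 4 + 8 * X ^ 5 + 17 * X ^ 6 + X ^ 7,
       14 + 4 * X ^ 2 + 14 * X ^ 3 + 4 * X ^ 4 + 11 * X ^ 5 + 16 * X ^ 6 + 12 * X ^ 7 +
         9 * X ^ 8,
       sub_eq_zero.mp (by rw [coherencePolyMod19]; ring_nf; reduce_mod_char)⟩
  · exact isCoprime_sub_of_dvd_sub coherencePolyMod19_dvd_X_pow_19_pow_3_sub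
      ⟨17 + 6 * X + 14 * X ^ 2 + 17 * X ^ 3 + 12 * X ^ 4 + 9 * X ^ 5 + 12 * X ^ 6 +
         8 * X ^ 7,
       10 + 17 * X + 13 * X ^ 2 + 14 * X ^ 3 + 11 * X ^ 5 + 16 * X ^ 6 + 17 * X ^ 7 +
         11 * X ^ 8,
       sub_eq_zero.mp (by rw [coherencePolyMod19]; ring_nf; reduce_mod_char)⟩
  · exact isCoprime_sub_of_dvd_sub coherencePolyMod19_dvd_X_pow_19_pow_4_sub
      ⟨17 + 8 * X + 7 * X ^ 2 + 9 * X ^ 3 + 15 * X ^ 5 + 7 * X ^ 6 + 16 * X ^ 7,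
       5 + 15 * X + 16 * X ^ 2 + 3 * X ^ 3 + 18 * X ^ 4 + 10 * X ^ 5 + X ^ 6 + 2 * X ^ 7 +
         7 * X ^ 8,
       sub_eq_zero.mp (by rw [coherencePolyMod19]; ring_nf; reduce_mod_char)⟩

/-- The polynomial `p(x) = 1 + 5x − 8x² − 80x³ − 78x⁴ + 146x⁵ − 80x⁶ − 584x⁷ + 677x⁸ + 1537x⁹`
is irreducible over `ℚ`. -/
theorem coherence_poly_irreducible :
    Irreducible (1 + 5 * X - 8 * X ^ 2 - 80 * X ^ 3 - 78 * X ^ 4 + 146 * X ^ 5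
      - 80 * X ^ 6 - 584 * X ^ 7 + 677 * X ^ 8 + 1537 * X ^ 9 : ℚ[X]) := by
  have : Fact (Nat.Prime 19) := ⟨by norm_num⟩
  have hprim : coherencePoly.IsPrimitive :=
    isPrimitive_of_isUnit_coeff 0 (by simp [coherencePoly])
  have hirr : Irreducible coherencePoly :=
    hprim.irreducible_of_irreducible_map_of_natDegree_eq
      (by rw [map_coherencePoly_zmod19, natDegree_coherencePolyMod19, natDegree_coherencePoly])
      (map_coherencePoly_zmod19 ▸ irreducible_coherencePolyMod19)
  simpa [coherencePoly] using (IsPrimitive.Int.irreducible_iff_irreducible_map_cast hprim).mp hirr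
end

section
/- There exist eight unit vectors φ_1, …, φ_8 in ℝ³ such that max_{1 ≤ i < j ≤ 8} |⟨φ_i, φ_j⟩| < 0.64759. -/
/-!
Take the paper's optimal packing, scale its coordinates by `10⁸` and round them to integers.
After squaring, the bound `|⟪a, b⟫| < c ‖a‖ ‖b‖` for integer vectors `a`, `b` is an inequality
between integers, which the kernel checks by evaluation for all 28 pairs; normalising the integer
vectors then gives the packing.
-/

open scoped RealInnerProductSpace

theorem abs_inner_inv_norm_smul_lt_of_sq_lt {E : Type*} [NormedAddCommGroup E]
    [InnerProductSpace ℝ E] {u w : E} {c : ℝ} (hc : 0 ≤ c)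
    (h : ⟪u, w⟫ ^ 2 < c ^ 2 * (⟪u, u⟫ * ⟪w, w⟫)) :
    |⟪‖u‖⁻¹ • u, ‖w‖⁻¹ • w⟫| < c := by
  rw [real_inner_self_eq_norm_sq, real_inner_self_eq_norm_sq] at h
  have hnorm : 0 < ‖u‖ * ‖w‖ := by
    refine (mul_nonneg (norm_nonneg u) (norm_nonneg w)).lt_of_ne fun h0 => ?_
    nlinarith [sq_nonneg ⟪u, w⟫, congrArg (· ^ 2) h0]
  rw [real_inner_smul_left, real_inner_smul_right, ← mul_assoc, ← mul_inv, abs_mul,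
    abs_inv, abs_of_pos hnorm, inv_mul_lt_iff₀ hnorm]
  exact abs_lt_of_sq_lt_sq (by linear_combination h) (by positivity)

theorem EuclideanSpace.inner_toLp_intCast {ι : Type*} [Fintype ι] (a b : ι → ℤ) :
    ⟪WithLp.toLp 2 (fun k => (a k : ℝ)), WithLp.toLp 2 (fun k => (b k : ℝ))⟫ =
      ((a ⬝ᵥ b : ℤ) : ℝ) := by
  simp [EuclideanSpace.inner_toLp_toLp, dotProduct, mul_comm]

def packingCoords : Fin 8 → Fin 3 → ℤ :=
  ![![0, 0, 100000000],
    ![99225076, 0, 12425146],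
    ![65491875, -75548141, -1814589],
    ![-57155421, -50393879, -64758898],
    ![-65889470, -60591506, 44578550],
    ![14348116, -74835932, 64758898],
    ![-14853895, -98346586, -10359090],
    ![73373877, -20556246, -64758898]]

theorem packingCoords_dotProduct_self_pos (i : Fin 8) :
    0 < packingCoords i ⬝ᵥ packingCoords i := by
  revert i
  decide

theorem packingCoords_coherence_lt {i j : Fin 8} (hij : i < j) :
    100000 ^ 2 * (packingCoords i ⬝ᵥ packingCoords j) ^ 2 <
      64759 ^ 2 * ((packingCoords i ⬝ᵥ packingCoords i) * (packingCoords j ⬝ᵥ packingCoords j)) := by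
  revert i j
  decide

noncomputable def packingVector (i : Fin 8) : EuclideanSpace ℝ (Fin 3) :=
  WithLp.toLp 2 fun k => (packingCoords i k : ℝ)

theorem packingVector_ne_zero (i : Fin 8) : packingVector i ≠ 0 := by
  rw [← inner_self_ne_zero (𝕜 := ℝ), packingVector, EuclideanSpace.inner_toLp_intCast,
    Int.cast_ne_zero]
  exact (packingCoords_dotProduct_self_pos i).ne'

theorem packingVector_inner_sq_lt {i j : Fin 8} (hij : i < j) :
    ⟪packingVector i, packingVector j⟫ ^ 2 <
      0.64759 ^ 2 * (⟪packingVector i, packingVector i⟫ * ⟪packingVector j, packingVector j⟫) := by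
  have h := (Int.cast_lt (R := ℝ)).2 (packingCoords_coherence_lt hij)
  push_cast at h
  simp only [packingVector, EuclideanSpace.inner_toLp_intCast]
  linarith

/-- There exist eight unit vectors in `ℝ³` whose coherence is strictly less than `0.64759`. -/
theorem exists_eight_packing :
    ∃ φ : Fin 8 → EuclideanSpace ℝ (Fin 3),
      (∀ i, ‖φ i‖ = 1) ∧
      ∀ i j : Fin 8, i < j → |(inner ℝ (φ i) (φ j) : ℝ)| < 0.64759 := by
  refine ⟨fun i => ‖packingVector i‖⁻¹ • packingVector i, fun i => ?_, fun i j hij => ?_⟩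
  · exact norm_smul_inv_norm (packingVector_ne_zero i)
  · exact abs_inner_inv_norm_smul_lt_of_sq_lt (by norm_num) (packingVector_inner_sq_lt hij)
end

section
/- Let μ and a_6 be real numbers with |a_6| < μ ≤ 0.64759, and suppose the determinant of the 4 × 4 matrix [[1, −μ, a_6, −μ], [−μ, 1, μ, μ], [a_6, μ, 1, μ], [−μ, μ, μ, 1]] equals 0. Then a_6 = (1 + μ − 4μ²) / (1 + μ). -/
/-! The determinant factors as `(μ - 1)(a₆ + 1)((1 + μ) a₆ - (1 + μ - 4μ²))`; since
`-1 < -μ < a₆` and `μ < 1`, the first two factors are nonzero, so the third vanishes. -/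

theorem det_minor_eq_mul {R : Type*} [CommRing R] (μ a : R) :
    (!![1, -μ, a, -μ;
        -μ, 1, μ, μ;
        a, μ, 1, μ;
        -μ, μ, μ, 1] : Matrix (Fin 4) (Fin 4) R).det
      = (μ - 1) * (a + 1) * ((1 + μ) * a - (1 + μ - 4 * μ ^ 2)) := by
  simp only [Matrix.det_succ_row_zero, Fin.sum_univ_succ, Matrix.det_unique, Fin.sum_univ_zero]
  simp [Fin.succAbove, Fin.lt_def]
  ring

/-- **Step 1.** If `|a₆| < μ ≤ 0.64759` and the `4 × 4` minor on rows and columns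
`{2, 5, 6, 7}` vanishes, then `a₆ = (1 + μ − 4μ²)/(1 + μ)`. -/
theorem step1 (μ a6 : ℝ) (ha : |a6| < μ) (hμ : μ ≤ 0.64759)
    (hdet : (!![1, -μ, a6, -μ;
               -μ, 1, μ, μ;
               a6, μ, 1, μ;
               -μ, μ, μ, 1] : Matrix (Fin 4) (Fin 4) ℝ).det = 0) :
    a6 = (1 + μ - 4 * μ ^ 2) / (1 + μ) := by
  obtain ⟨hlow, -⟩ := abs_lt.mp ha
  have hμ0 : 0 < μ := (abs_nonneg a6).trans_lt ha
  rw [det_minor_eq_mul] at hdet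
  have hμ1 : μ - 1 ≠ 0 := by linarith
  have ha1 : a6 + 1 ≠ 0 := by linarith
  have hlin : (1 + μ) * a6 - (1 + μ - 4 * μ ^ 2) = 0 := by simpa [hμ1, ha1] using hdet
  rw [eq_div_iff (by linarith)]
  linarith
end

section
/- Let μ, a_8, a_9 be real numbers with 0.6 ≤ μ ≤ 0.64759, |a_8| < μ, |a_9| < μ, and set a_6 = (1 + μ − 4μ²)/(1 + μ). Let M be the 5 × 5 symmetric matrix [[1, −μ, −μ, a_6, −μ], [−μ, 1, a_8, −μ, a_9], [−μ, a_8, 1, μ, μ], [a_6, −μ, μ, 1, μ], [−μ, a_9, μ, μ, 1]]. If every 4 × 4 minor of M vanishes (equivalently rank(M) ≤ 3), then a_9 = −a_8 and a_8² = (1 + μ − 3μ² − μ³)/(2 + 4μ). -/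
/-!
Rank at most 3 kills every `4 × 4` minor, and two of them suffice. Once the denominator `1 + μ`
of `a₆` is cleared, the principal minor on the first four indices is a multiple of
`(2 + 4μ)a₈² - (1 + μ - 3μ² - μ³)` and the minor on rows `{0,1,2,3}`, columns `{0,2,3,4}` is a
multiple of `a₈ + a₉`, both with prefactors that do not vanish for `0 < μ < 1`.
-/

theorem Matrix.det_submatrix_eq_zero_of_rank_lt {K m n k : Type*} [Field K] [Fintype n]
    [Fintype k] [DecidableEq k] (A : Matrix m n K) (r : k → m) (c : k → n)
    (h : A.rank < Fintype.card k) : (A.submatrix r c).det = 0 := by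
  by_contra hdet
  have hunit : IsUnit (A.submatrix r c) :=
    (Matrix.isUnit_iff_isUnit_det _).2 (isUnit_iff_ne_zero.2 hdet)
  have := (A.submatrix r c).rank_of_isUnit hunit ▸ A.rank_submatrix_le r c
  omega

theorem Matrix.det_fin_four_of {R : Type*} [CommRing R] (a b c d e f g h i j k l m n o p : R) :
    Matrix.det !![a, b, c, d; e, f, g, h; i, j, k, l; m, n, o, p] =
      a * (f * (k * p - l * o) - g * (j * p - l * n) + h * (j * o - k * n))
      - b * (e * (k * p - l * o) - g * (i * p - l * m) + h * (i * o - k * m))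
      + c * (e * (j * p - l * n) - f * (i * p - l * m) + h * (i * n - j * m))
      - d * (e * (j * o - k * n) - f * (i * o - k * m) + g * (i * n - j * m)) := by
  simp [Matrix.det_succ_row_zero, Fin.sum_univ_succ, Fin.succAbove]
  ring

def gramBlock {R : Type*} [Neg R] [One R] (μ a6 a8 a9 : R) : Matrix (Fin 5) (Fin 5) R :=
  !![1, -μ, -μ, a6, -μ;
     -μ, 1, a8, -μ, a9;
     -μ, a8, 1, μ, μ;
     a6, -μ, μ, 1, μ;
     -μ, a9, μ, μ, 1]

section CommRing

variable {R : Type*} [CommRing R] (μ a6 a8 a9 : R)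

theorem det_gramBlock_rows0123_cols0123 (h6 : a6 * (1 + μ) = 1 + μ - 4 * μ ^ 2) :
    (1 + μ) ^ 2 * ((gramBlock μ a6 a8 a9).submatrix ![0, 1, 2, 3] ![0, 1, 2, 3]).det
      = -(4 * μ ^ 2 * (1 - μ) * ((2 + 4 * μ) * a8 ^ 2 - (1 + μ - 3 * μ ^ 2 - μ ^ 3))) := by
  have hsub : (gramBlock μ a6 a8 a9).submatrix ![0, 1, 2, 3] ![0, 1, 2, 3] =
      !![1, -μ, -μ, a6; -μ, 1, a8, -μ; -μ, a8, 1, μ; a6, -μ, μ, 1] := by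
    ext i j; fin_cases i <;> fin_cases j <;> rfl
  rw [hsub, Matrix.det_fin_four_of]
  linear_combination ((a8 ^ 2 - 1) * (a6 * (1 + μ) + (1 + μ - 4 * μ ^ 2))) * h6

theorem det_gramBlock_rows0123_cols0234 (h6 : a6 * (1 + μ) = 1 + μ - 4 * μ ^ 2) :
    (1 + μ) ^ 2 * ((gramBlock μ a6 a8 a9).submatrix ![0, 1, 2, 3] ![0, 2, 3, 4]).det
      = 4 * μ ^ 2 * (1 - μ) ^ 2 * (1 + 2 * μ) * (a8 + a9) := by
  have hsub : (gramBlock μ a6 a8 a9).submatrix ![0, 1, 2, 3] ![0, 2, 3, 4] =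
      !![1, -μ, a6, -μ; -μ, a8, -μ, a9; -μ, 1, μ, μ; a6, μ, 1, μ] := by
    ext i j; fin_cases i <;> fin_cases j <;> rfl
  rw [hsub, Matrix.det_fin_four_of]
  linear_combination (2 * μ ^ 2 * (a8 - a9) * (1 + μ) +
    (μ * a8 - a9) * (a6 * (1 + μ) + (1 + μ - 4 * μ ^ 2))) * h6

end CommRing

theorem step2_general (μ a8 a9 : ℝ) (hμ1 : (0.6 : ℝ) ≤ μ) (hμ2 : μ ≤ 0.64759) :
    let a6 : ℝ := (1 + μ - 4 * μ ^ 2) / (1 + μ)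
    let M : Matrix (Fin 5) (Fin 5) ℝ :=
      !![1, -μ, -μ, a6, -μ;
         -μ, 1, a8, -μ, a9;
         -μ, a8, 1, μ, μ;
         a6, -μ, μ, 1, μ;
         -μ, a9, μ, μ, 1]
    M.rank ≤ 3 → a9 = -a8 ∧ a8 ^ 2 = (1 + μ - 3 * μ ^ 2 - μ ^ 3) / (2 + 4 * μ) := by
  intro a6 M hrank
  change (gramBlock μ a6 a8 a9).rank ≤ 3 at hrank
  have hμ0 : 0 < μ := by linarith
  have hμlt : 0 < 1 - μ := by linarith
  have h6 : a6 * (1 + μ) = 1 + μ - 4 * μ ^ 2 := div_mul_cancel₀ _ (by positivity)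
  have hminor (r c : Fin 4 → Fin 5) : ((gramBlock μ a6 a8 a9).submatrix r c).det = 0 :=
    Matrix.det_submatrix_eq_zero_of_rank_lt _ r c (by rw [Fintype.card_fin]; omega)
  have hsum := det_gramBlock_rows0123_cols0234 μ a6 a8 a9 h6
  have hsq := det_gramBlock_rows0123_cols0123 μ a6 a8 a9 h6
  rw [hminor, mul_zero, eq_comm] at hsum hsq
  constructor
  · have := (mul_eq_zero.1 hsum).resolve_left (by positivity)
    linarith
  · have := (mul_eq_zero.1 (neg_eq_zero.1 hsq)).resolve_left (by positivity)
    rw [eq_div_iff (by positivity)]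
    linarith

/-- **Step 2.** Let `0.6 ≤ μ ≤ 0.64759`, `|a₈| < μ`, `|a₉| < μ`, and set
`a₆ = (1 + μ − 4μ²)/(1 + μ)`. If the `5 × 5` principal submatrix `M` on rows and columns
`{2, 3, 5, 6, 7}` has rank at most 3 (i.e. all its `4 × 4` minors vanish), then
`a₉ = −a₈` and `a₈² = (1 + μ − 3μ² − μ³)/(2 + 4μ)`. -/
theorem step2 (μ a8 a9 : ℝ) (hμ1 : (0.6 : ℝ) ≤ μ) (hμ2 : μ ≤ 0.64759)
    (h8 : |a8| < μ) (h9 : |a9| < μ) :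
    let a6 : ℝ := (1 + μ - 4 * μ ^ 2) / (1 + μ)
    let M : Matrix (Fin 5) (Fin 5) ℝ :=
      !![1, -μ, -μ, a6, -μ;
         -μ, 1, a8, -μ, a9;
         -μ, a8, 1, μ, μ;
         a6, -μ, μ, 1, μ;
         -μ, a9, μ, μ, 1]
    M.rank ≤ 3 → a9 = -a8 ∧ a8 ^ 2 = (1 + μ - 3 * μ ^ 2 - μ ^ 3) / (2 + 4 * μ) :=
  step2_general μ a8 a9 hμ1 hμ2
end

section
/- Suppose real numbers μ, a_1, …, a_14 are such that the 8 × 8 symmetric matrix G(μ, a_1, …, a_14) has rank at most 3, 0.6 ≤ μ ≤ 0.64759, and |a_j| < μ for all 1 ≤ j ≤ 14. Then a_12 = a_6 and a_8 < 0. -/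
/-!
All 4 × 4 minors of a matrix of rank at most 3 vanish, and several minors of `G` factor into
simple polynomials in `μ` and a few of the `aⱼ`. The principal minors on `{2,3,6,7}` and
`{3,4,6,7}` give `(a₁₂² - a₆²)(1 - a₉²) = 0`, so `a₁₂ = ± a₆`; if `a₁₂ = -a₆`, the minor on rows
`{3,4,6,7}` and columns `{2,4,6,7}`, with the principal minors on `{2,5,6,7}` and `{2,3,6,7}`,
forces `1 + μ - 4μ² = 0` and hence `a₆ = 0`.
The principal minors on `{3,5,6,7}` and `{2,3,5,7}` differ by `4μ²(1 - μ)(a₈ + a₉)`, so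
`a₉ = -a₈`, and then `a₈²` is a function of `μ`. If `a₈ ≥ 0`, the minor on `{2,3,4,7}` bounds
`a₈` above by `(1 + μ - 4μ²)/(1 + μ)`, which is too small for that value of `a₈²` when
`0.6 ≤ μ ≤ 0.64759`.
-/

/-- The `8 × 8` symmetric matrix `G(μ, a₁, …, a₁₄)` from the paper. -/
def packingGram (μ a1 a2 a3 a4 a5 a6 a7 a8 a9 a10 a11 a12 a13 a14 : ℝ) :
    Matrix (Fin 8) (Fin 8) ℝ :=
  !![1,  a1,  μ,  a2,  a3, -μ,  a4, -μ;
     a1, 1,  -μ,  a5, -μ,  a6, -μ,  a7;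
     μ, -μ,   1,   μ,  a8, -μ,  a9, a10;
     a2, a5,  μ,   1, a11, a12,  μ,   μ;
     a3, -μ, a8, a11,   1,   μ,  μ,  -μ;
     -μ, a6, -μ, a12,   μ,   1,  μ, a13;
     a4, -μ, a9,   μ,   μ,   μ,  1, a14;
     -μ, a7, a10,  μ,  -μ, a13, a14,  1]

namespace Matrix

theorem det_fin_four {R : Type*} [CommRing R] (M : Matrix (Fin 4) (Fin 4) R) :
    M.det =
      M 0 0 * (M 1 1 * (M 2 2 * M 3 3 - M 2 3 * M 3 2) - M 1 2 * (M 2 1 * M 3 3 - M 2 3 * M 3 1)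
        + M 1 3 * (M 2 1 * M 3 2 - M 2 2 * M 3 1))
      - M 0 1 * (M 1 0 * (M 2 2 * M 3 3 - M 2 3 * M 3 2) - M 1 2 * (M 2 0 * M 3 3 - M 2 3 * M 3 0)
        + M 1 3 * (M 2 0 * M 3 2 - M 2 2 * M 3 0))
      + M 0 2 * (M 1 0 * (M 2 1 * M 3 3 - M 2 3 * M 3 1) - M 1 1 * (M 2 0 * M 3 3 - M 2 3 * M 3 0)
        + M 1 3 * (M 2 0 * M 3 1 - M 2 1 * M 3 0))
      - M 0 3 * (M 1 0 * (M 2 1 * M 3 2 - M 2 2 * M 3 1) - M 1 1 * (M 2 0 * M 3 2 - M 2 2 * M 3 0)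
        + M 1 2 * (M 2 0 * M 3 1 - M 2 1 * M 3 0)) := by
  rw [det_succ_row_zero, Fin.sum_univ_four]
  simp only [det_fin_three, submatrix_apply, Fin.succAbove, Fin.reduceSucc, Fin.reduceCastSucc,
    Fin.reduceLT, ↓reduceIte, Fin.coe_ofNat_eq_mod]
  ring

theorem det_submatrix_eq_zero_of_rank_lt_s14 {m n R : Type*} [Fintype n] [CommRing R] [IsDomain R]
    {k : ℕ} {A : Matrix m n R} (hA : A.rank < k) (r : Fin k → m) (c : Fin k → n) :
    (A.submatrix r c).det = 0 := by
  by_contra h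
  have := rank_of_det_ne_zero h ▸ A.rank_submatrix_le r c
  simp only [Fintype.card_fin] at this
  omega

end Matrix

namespace packingGram

variable {μ a1 a2 a3 a4 a5 a6 a7 a8 a9 a10 a11 a12 a13 a14 : ℝ}

local notation "G" => packingGram μ a1 a2 a3 a4 a5 a6 a7 a8 a9 a10 a11 a12 a13 a14

/- The minors are named after the paper's 1-based row and column indices; `Fin 8` is 0-based. -/

theorem det_submatrix_eq_zero (hG : (G).rank ≤ 3) (r c : Fin 4 → Fin 8) :
    ((G).submatrix r c).det = 0 :=
  Matrix.det_submatrix_eq_zero_of_rank_lt_s14 (by omega) r c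

theorem minor_2567 (hG : (G).rank ≤ 3) :
    (1 + a6) * (1 - μ) * ((1 + μ - 4 * μ ^ 2) - a6 * (1 + μ)) = 0 := by
  convert det_submatrix_eq_zero hG ![1, 4, 5, 6] ![1, 4, 5, 6] using 1
  rw [Matrix.det_fin_four]
  simp only [packingGram, Matrix.submatrix_apply, Matrix.of_apply, Matrix.cons_val]
  ring

theorem minor_2367 (hG : (G).rank ≤ 3) :
    (1 - a6 ^ 2) * (1 - a9 ^ 2) = 4 * μ ^ 2 * (1 - μ ^ 2) := by
  rw [← sub_eq_zero]
  convert det_submatrix_eq_zero hG ![1, 2, 5, 6] ![1, 2, 5, 6] using 1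
  rw [Matrix.det_fin_four]
  simp only [packingGram, Matrix.submatrix_apply, Matrix.of_apply, Matrix.cons_val]
  ring

theorem minor_3467 (hG : (G).rank ≤ 3) :
    (1 - a12 ^ 2) * (1 - a9 ^ 2) = 4 * μ ^ 2 * (1 - μ ^ 2) := by
  rw [← sub_eq_zero]
  convert det_submatrix_eq_zero hG ![2, 3, 5, 6] ![2, 3, 5, 6] using 1
  rw [Matrix.det_fin_four]
  simp only [packingGram, Matrix.submatrix_apply, Matrix.of_apply, Matrix.cons_val]
  ring

theorem minor_3467_2467_of_a12_eq_neg (hG : (G).rank ≤ 3) (ha12 : a12 = -a6) :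
    μ * (1 + a5) * (a9 * (1 + a6) - (1 - a6 - 2 * μ ^ 2)) = 0 := by
  convert det_submatrix_eq_zero hG ![2, 3, 5, 6] ![1, 3, 5, 6] using 1
  rw [Matrix.det_fin_four]
  simp only [packingGram, Matrix.submatrix_apply, Matrix.of_apply, Matrix.cons_val, ha12]
  ring

theorem minor_3567 (hG : (G).rank ≤ 3) :
    1 - 4 * μ ^ 2 + 2 * μ ^ 3 + μ ^ 4 + 2 * μ * (1 - μ) * a8 * a9
      - 2 * μ ^ 2 * (1 - μ) * (a8 + a9) = (1 - μ ^ 2) * (a8 ^ 2 + a9 ^ 2) := by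
  rw [← sub_eq_zero]
  convert det_submatrix_eq_zero hG ![2, 4, 5, 6] ![2, 4, 5, 6] using 1
  rw [Matrix.det_fin_four]
  simp only [packingGram, Matrix.submatrix_apply, Matrix.of_apply, Matrix.cons_val]
  ring

theorem minor_2357 (hG : (G).rank ≤ 3) :
    1 - 4 * μ ^ 2 + 2 * μ ^ 3 + μ ^ 4 + 2 * μ * (1 - μ) * a8 * a9
      + 2 * μ ^ 2 * (1 - μ) * (a8 + a9) = (1 - μ ^ 2) * (a8 ^ 2 + a9 ^ 2) := by
  rw [← sub_eq_zero]
  convert det_submatrix_eq_zero hG ![1, 2, 4, 6] ![1, 2, 4, 6] using 1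
  rw [Matrix.det_fin_four]
  simp only [packingGram, Matrix.submatrix_apply, Matrix.of_apply, Matrix.cons_val]
  ring

theorem minor_2347 (hG : (G).rank ≤ 3) :
    (1 - a9) * (1 + a5) * ((1 + a9) * (1 - a5) - 4 * μ ^ 2) = 0 := by
  convert det_submatrix_eq_zero hG ![1, 2, 3, 6] ![1, 2, 3, 6] using 1
  rw [Matrix.det_fin_four]
  simp only [packingGram, Matrix.submatrix_apply, Matrix.of_apply, Matrix.cons_val]
  ring

theorem a6_mul_one_add (hG : (G).rank ≤ 3) (hμ : μ < 1) (ha6 : -1 < a6) :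
    a6 * (1 + μ) = 1 + μ - 4 * μ ^ 2 := by
  have h := (mul_eq_zero.1 (minor_2567 hG)).resolve_left
    (mul_ne_zero (by linarith : (0 : ℝ) < 1 + a6).ne' (by linarith : (0 : ℝ) < 1 - μ).ne')
  linarith

theorem a12_eq_a6 (hG : (G).rank ≤ 3) (hμ0 : 0 < μ) (hμ1 : μ < 1) (ha5 : -1 < a5)
    (ha6 : -1 < a6) (ha9 : |a9| < 1) : a12 = a6 := by
  have hA := a6_mul_one_add hG hμ1 ha6
  have hB := minor_2367 hG
  have h : (a12 - a6) * (a12 + a6) * (1 - a9 ^ 2) = 0 := by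
    linear_combination hB - minor_3467 hG
  rcases mul_eq_zero.1 ((mul_eq_zero.1 h).resolve_right
    (sub_pos.2 ((sq_lt_one_iff_abs_lt_one a9).2 ha9)).ne') with hsub | hadd
  · linarith
  have ha12 : a12 = -a6 := by linarith
  have hC : a9 * (1 + 2 * μ) = μ ^ 2 := by
    have h1 := (mul_eq_zero.1 (minor_3467_2467_of_a12_eq_neg hG ha12)).resolve_left
      (mul_ne_zero hμ0.ne' (by linarith : (0 : ℝ) < 1 + a5).ne')
    have h2 : (a9 * (1 + 2 * μ)) * (2 * (1 - μ)) = μ ^ 2 * (2 * (1 - μ)) := by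
      linear_combination (1 + μ) * h1 - (a9 + 1) * hA
    exact mul_right_cancel₀ (by linarith : (0 : ℝ) < 2 * (1 - μ)).ne' h2
  -- Eliminating `a₆` and `a₉` from `hA`, `hB` and `hC`.
  have hkey : (1 + μ - 4 * μ ^ 2) * ((1 + μ) ^ 2 * (4 * μ ^ 2 * (1 - μ) * (1 + 2 * μ))) = 0 := by
    linear_combination ((1 + μ) ^ 2 * (1 + 2 * μ) ^ 2) * hB
      + (a6 * (1 + μ) + (1 + μ - 4 * μ ^ 2)) * ((1 + 2 * μ) ^ 2 - (a9 * (1 + 2 * μ)) ^ 2) * hA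
      + (8 * μ ^ 2 * (1 - μ) * (1 + 2 * μ)) * (a9 * (1 + 2 * μ) + μ ^ 2) * hC
  have hμ' : 1 + μ - 4 * μ ^ 2 = 0 := (mul_eq_zero.1 hkey).resolve_right
    (mul_pos (by positivity) (mul_pos (mul_pos (by positivity) (by linarith)) (by linarith))).ne'
  have ha6 : a6 = 0 :=
    (mul_eq_zero.1 (hA.trans hμ')).resolve_right (by linarith : (0 : ℝ) < 1 + μ).ne'
  rw [ha12, ha6, neg_zero]

theorem a8_add_a9_eq_zero (hG : (G).rank ≤ 3) (hμ0 : 0 < μ) (hμ1 : μ < 1) : a8 + a9 = 0 := by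
  have h : 4 * μ ^ 2 * (1 - μ) * (a8 + a9) = 0 := by
    linear_combination minor_2357 hG - minor_3567 hG
  exact (mul_eq_zero.1 h).resolve_left (mul_pos (by positivity) (by linarith)).ne'

theorem a8_sq_eq (hG : (G).rank ≤ 3) (hμ0 : 0 < μ) (hμ1 : μ < 1) :
    2 * (1 + 2 * μ) * (1 - μ) * a8 ^ 2 = μ ^ 4 + 2 * μ ^ 3 - 4 * μ ^ 2 + 1 := by
  have h := minor_3567 hG
  rw [show a9 = -a8 by linarith [a8_add_a9_eq_zero hG hμ0 hμ1]] at h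
  linear_combination -h

theorem one_add_a9_mul (hG : (G).rank ≤ 3) (ha5 : -1 < a5) (ha9 : a9 < 1) :
    (1 + a9) * (1 - a5) = 4 * μ ^ 2 := by
  have h := (mul_eq_zero.1 (minor_2347 hG)).resolve_left
    (mul_ne_zero (by linarith : (0 : ℝ) < 1 - a9).ne' (by linarith : (0 : ℝ) < 1 + a5).ne')
  linarith

theorem a8_upper_bound_sq_lt (hμ1 : 0.6 ≤ μ) (hμ2 : μ ≤ 0.64759) :
    2 * (1 + 2 * μ) * (1 - μ) * (1 + μ - 4 * μ ^ 2) ^ 2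
      < (μ ^ 4 + 2 * μ ^ 3 - 4 * μ ^ 2 + 1) * (1 + μ) ^ 2 := by
  nlinarith [mul_nonneg (sub_nonneg.2 hμ1) (sub_nonneg.2 hμ2), sq_nonneg (μ - 0.6),
    mul_nonneg (mul_nonneg (sub_nonneg.2 hμ1) (sub_nonneg.2 hμ2)) (sub_nonneg.2 hμ1),
    mul_nonneg (mul_nonneg (sub_nonneg.2 hμ1) (sub_nonneg.2 hμ2)) (sub_nonneg.2 hμ2)]

theorem a8_neg (hG : (G).rank ≤ 3) (hμ1 : 0.6 ≤ μ) (hμ2 : μ ≤ 0.64759) (ha5 : -μ < a5)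
    (ha8 : a8 < 1) (ha9 : a9 < 1) : a8 < 0 := by
  by_contra! ha8'
  have hμ0 : 0 < μ := by linarith
  have hμ : μ < 1 := by linarith
  have h := one_add_a9_mul hG (by linarith) ha9
  rw [show a9 = -a8 by linarith [a8_add_a9_eq_zero hG hμ0 hμ]] at h
  -- `1 - a₅ < 1 + μ` turns `(1 - a₈)(1 - a₅) = 4μ²` into an upper bound on `a₈`.
  have hub : a8 * (1 + μ) < 1 + μ - 4 * μ ^ 2 := by
    nlinarith [mul_pos (by linarith : (0 : ℝ) < 1 - a8) (by linarith : (0 : ℝ) < μ + a5)]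
  refine lt_irrefl ((μ ^ 4 + 2 * μ ^ 3 - 4 * μ ^ 2 + 1) * (1 + μ) ^ 2) ?_
  calc _ = 2 * (1 + 2 * μ) * (1 - μ) * (a8 * (1 + μ)) ^ 2 := by
        linear_combination -(1 + μ) ^ 2 * a8_sq_eq hG hμ0 hμ
    _ < 2 * (1 + 2 * μ) * (1 - μ) * (1 + μ - 4 * μ ^ 2) ^ 2 := by
        gcongr
    _ < _ := a8_upper_bound_sq_lt hμ1 hμ2

end packingGram

theorem step5_general
    (μ a1 a2 a3 a4 a5 a6 a7 a8 a9 a10 a11 a12 a13 a14 : ℝ)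
    (hrank : (packingGram μ a1 a2 a3 a4 a5 a6 a7 a8 a9 a10 a11 a12 a13 a14).rank ≤ 3)
    (hμ1 : (0.6 : ℝ) ≤ μ) (hμ2 : μ ≤ 0.64759)
    (h5 : |a5| < μ)
    (h6 : |a6| < μ) (h8 : |a8| < μ) (h9 : |a9| < μ) :
    a12 = a6 ∧ a8 < 0 := by
  have hμ0 : 0 < μ := by linarith
  have hμ : μ < 1 := by linarith
  have ha9 : |a9| < 1 := h9.trans hμ
  rw [abs_lt] at h5 h6 h8 h9
  exact ⟨packingGram.a12_eq_a6 hrank hμ0 hμ (by linarith) (by linarith) ha9,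
    packingGram.a8_neg hrank hμ1 hμ2 h5.1 (by linarith) (by linarith)⟩

/-- **Step 5.** Under the rank-3 and coherence conditions on `G`, `a₁₂ = a₆` and `a₈ < 0`. -/
theorem step5
    (μ a1 a2 a3 a4 a5 a6 a7 a8 a9 a10 a11 a12 a13 a14 : ℝ)
    (hrank : (packingGram μ a1 a2 a3 a4 a5 a6 a7 a8 a9 a10 a11 a12 a13 a14).rank ≤ 3)
    (hμ1 : (0.6 : ℝ) ≤ μ) (hμ2 : μ ≤ 0.64759)
    (h1 : |a1| < μ) (h2 : |a2| < μ) (h3 : |a3| < μ) (h4 : |a4| < μ) (h5 : |a5| < μ)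
    (h6 : |a6| < μ) (h7 : |a7| < μ) (h8 : |a8| < μ) (h9 : |a9| < μ) (h10 : |a10| < μ)
    (h11 : |a11| < μ) (h12 : |a12| < μ) (h13 : |a13| < μ) (h14 : |a14| < μ) :
    a12 = a6 ∧ a8 < 0 :=
  step5_general μ a1 a2 a3 a4 a5 a6 a7 a8 a9 a10 a11 a12 a13 a14 hrank hμ1 hμ2 h5 h6 h8 h9
end

section
/- Suppose real numbers μ, a_1, …, a_14 are such that the 8 × 8 symmetric matrix G(μ, a_1, …, a_14) has rank at most 3, 0.6 ≤ μ ≤ 0.64759, and |a_j| < μ for all 1 ≤ j ≤ 14. Then a_11 = (1 − a_5 + μ − a_5 μ − 6μ²)/(2μ). -/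
open Matrix

variable {m n ι K : Type*} [Field K] [Fintype n] [Fintype ι] [DecidableEq ι]

namespace Matrix

theorem apply_eq_dotProduct_inv_mulVec_of_rank_le (A : Matrix m n K) (s : ι → m) (t : ι → n)
    (hA : A.rank ≤ Fintype.card ι) (hM : IsUnit (A.submatrix s t).det) (i : m) (j : n) :
    A i j = (fun k => A i (t k)) ⬝ᵥ ((A.submatrix s t)⁻¹ *ᵥ fun k => A (s k) j) := by
  set S := A.submatrix (Sum.elim (fun _ : Unit => i) s) (Sum.elim (fun _ : Unit => j) t)
  have hS : S.det = 0 := by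
    by_contra hS
    have hcard := rank_of_isUnit S ((isUnit_iff_isUnit_det S).mpr (isUnit_iff_ne_zero.mpr hS))
    have hle : S.rank ≤ A.rank := rank_submatrix_le _ _ _
    simp only [Fintype.card_sum, Fintype.card_unit] at hcard
    omega
  have hblocks : S = fromBlocks (of fun _ _ => A i j) (of fun _ k => A i (t k))
      (of fun k _ => A (s k) j) (A.submatrix s t) := by
    ext (_ | _) (_ | _) <;> rfl
  let := invertibleOfIsUnitDet _ hM
  rw [hblocks, det_fromBlocks₂₂, det_unique (n := Unit), invOf_eq_nonsing_inv] at hS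
  have hschur := (mul_eq_zero.mp hS).resolve_left hM.ne_zero
  rw [sub_apply, sub_eq_zero, Matrix.mul_assoc] at hschur
  simpa [Matrix.mul_apply, mulVec, dotProduct] using hschur

def equiangular (μ : K) : Matrix ι ι K :=
  (1 - μ) • 1 + μ • of fun _ _ => 1

theorem equiangular_mul_eq_one (μ : K) (hD : (1 - μ) * (1 + (Fintype.card ι - 1) * μ) ≠ 0) :
    equiangular μ * (((1 - μ) * (1 + (Fintype.card ι - 1) * μ))⁻¹ •
      ((1 + (Fintype.card ι - 1) * μ) • 1 - μ • of fun _ _ => 1)) =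
        (1 : Matrix ι ι K) := by
  generalize hc : 1 + ((Fintype.card ι : K) - 1) * μ = c at hD ⊢
  have hμ : 1 - μ ≠ 0 := left_ne_zero_of_mul hD
  have hc0 : c ≠ 0 := right_ne_zero_of_mul hD
  ext i j
  simp only [equiangular, Matrix.mul_apply, add_apply, sub_apply, smul_apply, one_apply, of_apply,
    smul_eq_mul, mul_ite, mul_one, mul_zero, ite_mul, zero_mul, add_mul, mul_sub,
    Finset.sum_add_distrib, Finset.sum_sub_distrib, Finset.sum_ite_eq, Finset.sum_ite_eq',
    Finset.mem_univ, if_true, Finset.sum_const, Finset.card_univ, nsmul_eq_mul]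
  split_ifs <;> field_simp <;> linear_combination -μ * hc

end Matrix

/-- `(1 - μ) (1 + (n - 1) μ) ⟪X, Y⟫` in the coordinates `x k = ⟪X, v k⟫`, `y k = ⟪Y, v k⟫`
with respect to a basis `v` whose Gram matrix is `equiangular μ`, whose inverse is
`((1 - μ) (1 + (n - 1) μ))⁻¹ ((1 + (n - 1) μ) I - μ J)`. -/
def equiangularForm (μ : K) (x y : ι → K) : K :=
  (1 + (Fintype.card ι - 1) * μ) * (x ⬝ᵥ y) - μ * (∑ k, x k) * (∑ k, y k)

theorem equiangularForm_fin_three (μ x₀ x₁ x₂ y₀ y₁ y₂ : K) :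
    equiangularForm μ ![x₀, x₁, x₂] ![y₀, y₁, y₂] =
      (1 + 2 * μ) * (x₀ * y₀ + x₁ * y₁ + x₂ * y₂) -
        μ * (x₀ + x₁ + x₂) * (y₀ + y₁ + y₂) := by
  simp only [equiangularForm, dotProduct, Fin.sum_univ_three, Fintype.card_fin, cons_val_zero,
    cons_val_one, cons_val_two, tail_cons, head_cons]
  ring

theorem Matrix.equiangularForm_eq_of_rank_le (A : Matrix m n K) (s : ι → m) (t : ι → n) (μ : K)
    (hA : A.rank ≤ Fintype.card ι) (hM : A.submatrix s t = equiangular μ)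
    (hD : (1 - μ) * (1 + (Fintype.card ι - 1) * μ) ≠ 0) (i : m) (j : n) :
    equiangularForm μ (fun k => A i (t k)) (fun k => A (s k) j) =
      (1 - μ) * (1 + (Fintype.card ι - 1) * μ) * A i j := by
  have hinv := equiangular_mul_eq_one μ hD
  rw [← hM] at hinv
  rw [A.apply_eq_dotProduct_inv_mulVec_of_rank_le s t hA (isUnit_det_of_right_inverse hinv) i j,
    inv_eq_right_inv hinv]
  have hJ (v : ι → K) : (of fun _ _ => 1 : Matrix ι ι K) *ᵥ v = fun _ => ∑ k, v k := by
    ext; simp [mulVec, dotProduct]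
  simp only [smul_mulVec, sub_mulVec, one_mulVec, hJ, dotProduct_smul, dotProduct_sub,
    smul_eq_mul, mul_inv_cancel_left₀ hD]
  simp only [equiangularForm, dotProduct, ← Finset.sum_mul]
  ring

namespace packingGram

section

variable (μ a1 a2 a3 a4 a5 a6 a7 a8 a9 a10 a11 a12 a13 a14 : ℝ)

local notation "G" => packingGram μ a1 a2 a3 a4 a5 a6 a7 a8 a9 a10 a11 a12 a13 a14

theorem isSymm : Matrix.IsSymm G := by
  ext i j; fin_cases i <;> fin_cases j <;> rfl

variable {μ a1 a2 a3 a4 a5 a6 a7 a8 a9 a10 a11 a12 a13 a14}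

theorem equiangularForm_eq (hrank : Matrix.rank G ≤ 3) (hμ : μ ≠ 1) (hμ' : 1 + 2 * μ ≠ 0)
    (i j : Fin 8) :
    equiangularForm μ ![G i 4, G i 5, G i 6] ![G j 4, G j 5, G j 6] =
      (1 - μ) * (1 + 2 * μ) * G i j := by
  have hM : Matrix.submatrix G ![4, 5, 6] ![4, 5, 6] = equiangular μ := by
    ext a b; fin_cases a <;> fin_cases b <;> simp [packingGram, equiangular]
  have hD : (1 - μ) * (1 + ((Fintype.card (Fin 3) : ℝ) - 1) * μ) ≠ 0 := by
    norm_num; exact ⟨sub_ne_zero.mpr hμ.symm, hμ'⟩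
  have h := Matrix.equiangularForm_eq_of_rank_le G ![4, 5, 6] ![4, 5, 6] μ hrank hM hD i j
  norm_num at h
  convert h using 2 <;> ext k <;> fin_cases k <;> simp [(isSymm ..).apply j]

end

variable {μ a5 a6 a8 a9 a11 a12 : ℝ}

theorem a6_eq (ha6 : a6 ≠ -1)
    (h11 : equiangularForm μ ![-μ, a6, -μ] ![-μ, a6, -μ] = (1 - μ) * (1 + 2 * μ)) :
    (1 + μ) * a6 = 1 + μ - 4 * μ ^ 2 := by
  rw [equiangularForm_fin_three] at h11
  have h : (a6 + 1) * ((1 + μ) * a6 - (1 + μ - 4 * μ ^ 2)) = 0 := by linear_combination h11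
  exact sub_eq_zero.mp ((mul_eq_zero.mp h).resolve_left (add_eq_zero_iff_eq_neg.not.mpr ha6))

theorem a9_eq_neg_a8 (hμ : μ ≠ 0) (ha6 : a6 ≠ -1) (h6 : (1 + μ) * a6 = 1 + μ - 4 * μ ^ 2)
    (h12 : equiangularForm μ ![-μ, a6, -μ] ![a8, -μ, a9] = (1 - μ) * (1 + 2 * μ) * -μ) :
    a9 = -a8 := by
  rw [equiangularForm_fin_three] at h12
  have h : (μ * (a6 + 1)) * (a8 + a9) = 0 := by linear_combination -h12 - μ * h6
  have := (mul_eq_zero.mp h).resolve_left (mul_ne_zero hμ (add_eq_zero_iff_eq_neg.not.mpr ha6))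
  linarith

theorem a12_eq_a6_s17 (hμ : 0 < μ) (h6 : (1 + μ) * a6 = 1 + μ - 4 * μ ^ 2)
    (h22 : equiangularForm μ ![a8, -μ, -a8] ![a8, -μ, -a8] = (1 - μ) * (1 + 2 * μ))
    (h23 : equiangularForm μ ![a8, -μ, -a8] ![a11, a12, μ] = (1 - μ) * (1 + 2 * μ) * μ)
    (h33 : equiangularForm μ ![a11, a12, μ] ![a11, a12, μ] = (1 - μ) * (1 + 2 * μ))
    (ha11 : a11 ≠ μ) :
    a12 = a6 := by
  rw [equiangularForm_fin_three] at h22 h23 h33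
  /- In the coordinates `(⟪·, v₄⟫, ⟪·, v₅⟫, ⟪·, v₆⟫)`, `-v₁` is `u = (μ, -a₆, μ)` and `v₃` lies
  on the line through `u` with direction `w = (μ (1 + μ), p, 0)`; `q` is `equiangularForm μ w w`
  and `b` is `equiangularForm μ w u`. -/
  set p := (1 + 2 * μ) * a8 + μ ^ 2
  set q := μ ^ 2 * (1 + μ) ^ 2 + p ^ 2 + μ * (μ * (1 + μ) - p) ^ 2
  set b := μ ^ 2 * (1 + μ) + μ ^ 2 * (1 + μ) * a6 - 2 * μ ^ 2 * p - (1 + μ) * p * a6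
  have hline : p * (a11 - μ) = μ * (1 + μ) * (a12 + a6) := by linear_combination h23 - μ * h6
  have hsphere : (a11 - μ) * ((a11 - μ) * q + 2 * μ * (1 + μ) * b) = 0 := by
    linear_combination μ ^ 2 * (1 + μ) ^ 2 * h33 - μ ^ 2 * (1 + μ) ^ 2 * (a6 + 1) * h6
      - (2 * μ * (1 + μ) * ((1 + μ) * a6 + 2 * μ ^ 2)
        - 2 * (a11 - μ) * ((1 + μ) * p - μ ^ 2 * (1 + μ))
        + (p * (a11 - μ) - μ * (1 + μ) * (a12 + a6)) * (1 + μ)) * hline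
  have hmirror := (mul_eq_zero.mp hsphere).resolve_left (sub_ne_zero.mpr ha11)
  have hcross : p * b + a6 * q = 0 := by
    linear_combination μ ^ 2 * ((1 + μ) ^ 2 - p) * h6 - μ ^ 2 * (1 + 2 * μ) * h22
  have h : μ * (1 + μ) * q * (a12 - a6) = 0 := by
    linear_combination -q * hline + p * hmirror - 2 * μ * (1 + μ) * hcross
  have := (mul_eq_zero.mp h).resolve_left (by positivity)
  linarith

theorem a11_eq (hμ : 0 < μ) (hμ1 : μ < 1) (h6 : (1 + μ) * a6 = 1 + μ - 4 * μ ^ 2)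
    (h13 : equiangularForm μ ![-μ, a6, -μ] ![a11, a6, μ] = (1 - μ) * (1 + 2 * μ) * a5) :
    a11 = (1 - a5 + μ - a5 * μ - 6 * μ ^ 2) / (2 * μ) := by
  rw [equiangularForm_fin_three] at h13
  have hD : (1 - μ) * (1 + 2 * μ) ≠ 0 := by nlinarith
  rw [eq_div_iff (by positivity), ← mul_right_inj' hD, ← sub_eq_zero]
  linear_combination
    -(1 + μ) * h13 + (-μ * a11 + (1 + μ - 4 * μ ^ 2) + (1 + μ) * a6 + μ ^ 2) * h6

end packingGram

theorem step8_general
    (μ a1 a2 a3 a4 a5 a6 a7 a8 a9 a10 a11 a12 a13 a14 : ℝ)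
    (hrank : (packingGram μ a1 a2 a3 a4 a5 a6 a7 a8 a9 a10 a11 a12 a13 a14).rank ≤ 3)
    (hμ1 : (0.6 : ℝ) ≤ μ) (hμ2 : μ ≤ 0.64759)
    (h6 : |a6| < μ)
    (h11 : |a11| < μ) :
    a11 = (1 - a5 + μ - a5 * μ - 6 * μ ^ 2) / (2 * μ) := by
  have hμ_pos : 0 < μ := by linarith
  have hμ_lt : μ < 1 := by linarith
  have gram := packingGram.equiangularForm_eq hrank hμ_lt.ne (by linarith)
  have e11 : equiangularForm μ ![-μ, a6, -μ] ![-μ, a6, -μ] = (1 - μ) * (1 + 2 * μ) := by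
    simpa [packingGram] using gram 1 1
  have e12 : equiangularForm μ ![-μ, a6, -μ] ![a8, -μ, a9] = (1 - μ) * (1 + 2 * μ) * -μ := by
    simpa [packingGram] using gram 1 2
  have e13 : equiangularForm μ ![-μ, a6, -μ] ![a11, a12, μ] = (1 - μ) * (1 + 2 * μ) * a5 := by
    simpa [packingGram] using gram 1 3
  have e22 : equiangularForm μ ![a8, -μ, a9] ![a8, -μ, a9] = (1 - μ) * (1 + 2 * μ) := by
    simpa [packingGram] using gram 2 2
  have e23 : equiangularForm μ ![a8, -μ, a9] ![a11, a12, μ] = (1 - μ) * (1 + 2 * μ) * μ := by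
    simpa [packingGram] using gram 2 3
  have e33 : equiangularForm μ ![a11, a12, μ] ![a11, a12, μ] = (1 - μ) * (1 + 2 * μ) := by
    simpa [packingGram] using gram 3 3
  have ha6 : a6 ≠ -1 := by rw [abs_lt] at h6; linarith
  have hval6 := packingGram.a6_eq ha6 e11
  obtain rfl := packingGram.a9_eq_neg_a8 hμ_pos.ne' ha6 hval6 e12
  obtain rfl := packingGram.a12_eq_a6_s17 hμ_pos hval6 e22 e23 e33 (lt_of_abs_lt h11).ne
  exact packingGram.a11_eq hμ_pos hμ_lt hval6 e13

/-- **Step 8.** Under the rank-3 and coherence conditions on `G`, the coefficient `a₁₁` is determined. -/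
theorem step8
    (μ a1 a2 a3 a4 a5 a6 a7 a8 a9 a10 a11 a12 a13 a14 : ℝ)
    (hrank : (packingGram μ a1 a2 a3 a4 a5 a6 a7 a8 a9 a10 a11 a12 a13 a14).rank ≤ 3)
    (hμ1 : (0.6 : ℝ) ≤ μ) (hμ2 : μ ≤ 0.64759)
    (h1 : |a1| < μ) (h2 : |a2| < μ) (h3 : |a3| < μ) (h4 : |a4| < μ) (h5 : |a5| < μ)
    (h6 : |a6| < μ) (h7 : |a7| < μ) (h8 : |a8| < μ) (h9 : |a9| < μ) (h10 : |a10| < μ)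
    (h11 : |a11| < μ) (h12 : |a12| < μ) (h13 : |a13| < μ) (h14 : |a14| < μ) :
    a11 = (1 - a5 + μ - a5 * μ - 6 * μ ^ 2) / (2 * μ) :=
  step8_general μ a1 a2 a3 a4 a5 a6 a7 a8 a9 a10 a11 a12 a13 a14 hrank hμ1 hμ2 h6 h11
end
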